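/- arXiv:1405.2225 — 2 statements merged into one kernel-verified Lean document; each statement's English description precedes it below -/
import Mathlib

section
/- Let Π be a compatible partition system on X, let T_Π = (T;φ) be the weak X-tree with Σ(T_Π) = Σ_Π, let u be a vertex of T_Π with φ⁻¹(u) ≠ ∅, let e be an edge of T_Π incident with u, and let B be the part of the split σ_e with φ⁻¹(u) ⊆ B. Then there exists a partition π ∈ Π with B ∈ π. -/
/-!
Write `e = s(u, v)`; `B` is the set of labels on the `u`-side of `e`. The split `σ_e` is
`{C, X − C}` for a part `C` of some `π ∈ Π`; if `C = B` we are done, so `C` is the `v`-side.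
Let `A` be the part of `π` containing a label `x` of `u`. The split `{A, X − A}` is displayed
by an edge `f`, and `A` is the set of labels on the `u`-side of `f`. As `e` is a bridge, `f`
lies on at most one side of `e`, so the `u`-side of `f` contains a whole side of `e`. It cannot
contain `C`, which is disjoint from `A`; hence it contains `B`, and `A = B`.
-/

open scoped Classical

/-- A weak X-tree: a finite tree together with a labelling map `lab : X → V`
such that every degree-one vertex (i.e. vertex with a unique neighbour) is labelled. -/
structure WeakXTree (X : Type) [Fintype X] [DecidableEq X] where
  V : Type
  [fintypeV : Fintype V]
  [decEqV : DecidableEq V]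
  G : SimpleGraph V
  isTree : G.IsTree
  lab : X → V
  leaf_labelled : ∀ v : V, (∃! w : V, G.Adj v w) → v ∈ Set.range lab

attribute [instance] WeakXTree.fintypeV WeakXTree.decEqV

variable {X : Type} [Fintype X] [DecidableEq X]

namespace WeakXTree

/-- A leaf is a vertex with a unique neighbour (degree one). -/
def IsLeaf (T : WeakXTree X) (v : T.V) : Prop := ∃! w : T.V, T.G.Adj v w

/-- The split of `X` displayed by an edge `e` of the tree: the (two) sets
`φ⁻¹(V₁)`, `φ⁻¹(V₂)` where `V₁, V₂` are the components of `T ∖ e`. -/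
noncomputable def splitOf (T : WeakXTree X) (e : Sym2 T.V) : Finset (Finset X) :=
  Finset.image (fun u : T.V =>
    Finset.univ.filter (fun x : X => (T.G.deleteEdges {e}).Reachable u (T.lab x)))
    Finset.univ

/-- The multiset of splits displayed by the edges of a weak X-tree. -/
noncomputable def splits (T : WeakXTree X) : Multiset (Finset (Finset X)) :=
  T.G.edgeFinset.val.map T.splitOf

end WeakXTree

/-- A partition of `X`: nonempty parts, every element of `X` in exactly one part. -/
def IsPartition (π : Finset (Finset X)) : Prop :=
  (∀ A ∈ π, A.Nonempty) ∧ ∀ x : X, ∃! A : Finset X, A ∈ π ∧ x ∈ A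

/-- A split of `X` is a partition of `X` into exactly two parts. -/
def IsSplit (σ : Finset (Finset X)) : Prop := IsPartition σ ∧ σ.card = 2

/-- A split system on `X` is a multiset of splits of `X`. -/
def IsSplitSystem (S : Multiset (Finset (Finset X))) : Prop := ∀ σ ∈ S, IsSplit σ

/-- Two splits `{A₁,B₁}` and `{A₂,B₂}` are compatible if one of the four
intersections of a part of one with a part of the other is empty. -/
def SplitsCompatible (σ₁ σ₂ : Finset (Finset X)) : Prop :=
  ∃ A ∈ σ₁, ∃ B ∈ σ₂, A ∩ B = ∅

/-- A split system is compatible if its splits are pairwise compatible. -/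
def CompatibleSystem (S : Multiset (Finset (Finset X))) : Prop :=
  ∀ σ₁ ∈ S, ∀ σ₂ ∈ S, SplitsCompatible σ₁ σ₂

/-- A partition system on `X`: a multiset of partitions of `X` into at least two parts. -/
def IsPartitionSystem (P : Multiset (Finset (Finset X))) : Prop :=
  ∀ π ∈ P, IsPartition π ∧ 2 ≤ π.card

/-- The multiset of splits `{A, X − A}` for `A` a part of the partition `π`. -/
def partitionSplits (π : Finset (Finset X)) : Multiset (Finset (Finset X)) :=
  π.val.map (fun A => ({A, Aᶜ} : Finset (Finset X)))

/-- `Σ_Π`: the multiset union over `π ∈ Π` of the splits `{A, X − A}`, `A ∈ π`. -/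
def systemSplits (P : Multiset (Finset (Finset X))) : Multiset (Finset (Finset X)) :=
  P.bind partitionSplits

/-- A partition system is strongly compatible if any two of its partitions are
equal or have parts whose union is `X`. -/
def StronglyCompatible (P : Multiset (Finset (Finset X))) : Prop :=
  ∀ π₁ ∈ P, ∀ π₂ ∈ P, π₁ = π₂ ∨ ∃ A ∈ π₁, ∃ B ∈ π₂, A ∪ B = Finset.univ

namespace WeakXTree

/-- A weak X-tree is even if all pairwise distances between labelled vertices are even. -/
def IsEven (T : WeakXTree X) : Prop :=
  ∀ x y : X, Even (T.G.dist (T.lab x) (T.lab y))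

/-- A vertex of a weak X-tree is even if it has even distance to some leaf. -/
def EvenVertex (T : WeakXTree X) (v : T.V) : Prop :=
  ∃ l : T.V, T.IsLeaf l ∧ Even (T.G.dist v l)

/-- A set `E` of edges of `T` displays the partition `π` if there is a bijection
`ξ : π → E` with `σ_{ξ(A)} = {A, X − A}` for each part `A ∈ π`. -/
def Displays (T : WeakXTree X) (E : Finset (Sym2 T.V)) (π : Finset (Finset X)) : Prop :=
  ↑E ⊆ T.G.edgeSet ∧ ∃ ξ : Finset X → Sym2 T.V,
    Set.BijOn ξ ↑π ↑E ∧ ∀ A ∈ π, T.splitOf (ξ A) = {A, Aᶜ}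

/-- The partition `π(v)` displayed by a vertex `v`: `x` and `y` are in the same
part iff the path from `φ(x)` to `φ(y)` does not pass through `v`. -/
noncomputable def vertexPartition (T : WeakXTree X) (v : T.V) : Finset (Finset X) :=
  Finset.image (fun x : X => Finset.univ.filter (fun y : X =>
    ∀ p : T.G.Walk (T.lab x) (T.lab y), p.IsPath → v ∉ p.support)) Finset.univ

end WeakXTree

namespace SimpleGraph

variable {V : Type} {G : SimpleGraph V}

lemma Reachable.deleteEdges_of_not_reachable {w z p q : V} (h : G.Reachable w z)
    (hp : ¬ G.Reachable w p) : (G.deleteEdges {s(p, q)}).Reachable w z := by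
  obtain ⟨W⟩ := h
  exact reachable_deleteEdges_iff_exists_walk.mpr
    ⟨W, fun hf => hp ⟨W.takeUntil p (W.fst_mem_support_of_mem_edges hf)⟩⟩

lemma Reachable.deleteEdges_or {u v w : V} (h : G.Reachable w u) :
    (G.deleteEdges {s(u, v)}).Reachable u w ∨ (G.deleteEdges {s(u, v)}).Reachable v w := by
  obtain ⟨W⟩ := h
  induction W with
  | nil => exact .inl .rfl
  | @cons a c u hac _ ih =>
    by_cases he : s(a, c) = s(u, v)
    · rcases Sym2.eq_iff.mp he with ⟨rfl, -⟩ | ⟨rfl, -⟩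
      exacts [.inl .rfl, .inr .rfl]
    · have hca : (G.deleteEdges {s(u, v)}).Adj c a :=
        (deleteEdges_adj.mpr ⟨hac, by simpa using he⟩).symm
      exact ih.imp (·.trans hca.reachable) (·.trans hca.reachable)

lemma IsBridge.forall_reachable_deleteEdges_or {u v : V} {f : Sym2 V} (huv : G.Adj u v)
    (hbr : G.IsBridge s(u, v)) (hf : f ≠ s(u, v)) :
    (∀ z, (G.deleteEdges {s(u, v)}).Reachable u z → (G.deleteEdges {f}).Reachable u z) ∨
      (∀ z, (G.deleteEdges {s(u, v)}).Reachable v z → (G.deleteEdges {f}).Reachable u z) := by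
  induction f using Sym2.ind with
  | _ p q =>
  have hmono {a b : V} (h : ((G.deleteEdges {s(u, v)}).deleteEdges {s(p, q)}).Reachable a b) :
      (G.deleteEdges {s(p, q)}).Reachable a b :=
    h.mono (deleteEdges_mono (deleteEdges_le _))
  by_cases hup : (G.deleteEdges {s(u, v)}).Reachable u p
  · have hvp : ¬ (G.deleteEdges {s(u, v)}).Reachable v p :=
      fun hvp => isBridge_iff.mp hbr (hup.trans hvp.symm)
    have huv' : (G.deleteEdges {s(p, q)}).Adj u v :=
      deleteEdges_adj.mpr ⟨huv, by simpa using hf.symm⟩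
    exact .inr fun z hz => huv'.reachable.trans (hmono (hz.deleteEdges_of_not_reachable hvp))
  · exact .inl fun z hz => hmono (hz.deleteEdges_of_not_reachable hup)

end SimpleGraph

lemma IsPartition.disjoint {α : Type} {π : Finset (Finset α)} (hπ : IsPartition π) {A C : Finset α}
    (hA : A ∈ π) (hC : C ∈ π) (hAC : A ≠ C) : Disjoint A C :=
  Finset.disjoint_left.mpr fun x hxA hxC => hAC ((hπ.2 x).unique ⟨hA, hxA⟩ ⟨hC, hxC⟩)

lemma mem_systemSplits {P : Multiset (Finset (Finset X))} {σ : Finset (Finset X)} :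
    σ ∈ systemSplits P ↔ ∃ π ∈ P, ∃ A ∈ π, {A, Aᶜ} = σ := by
  simp [systemSplits, partitionSplits]

namespace WeakXTree

open SimpleGraph

variable (T : WeakXTree X)

lemma mem_splits {σ : Finset (Finset X)} : σ ∈ T.splits ↔ ∃ e ∈ T.G.edgeSet, T.splitOf e = σ := by
  simp [splits]

lemma isBridge_of_adj {u v : T.V} (huv : T.G.Adj u v) : T.G.IsBridge s(u, v) :=
  isAcyclic_iff_forall_adj_isBridge.mp T.isTree.isAcyclic huv

/-- `T.splitOf e` is by definition the image of `T.side e`. -/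
noncomputable def side (e : Sym2 T.V) (w : T.V) : Finset X :=
  Finset.univ.filter fun x => (T.G.deleteEdges {e}).Reachable w (T.lab x)

variable {T}

@[simp]
lemma mem_side {e : Sym2 T.V} {w : T.V} {x : X} :
    x ∈ T.side e w ↔ (T.G.deleteEdges {e}).Reachable w (T.lab x) := by
  simp [side]

lemma side_eq_of_reachable {e : Sym2 T.V} {w w' : T.V} (h : (T.G.deleteEdges {e}).Reachable w w') :
    T.side e w = T.side e w' := by
  ext x
  simp only [mem_side]
  exact ⟨h.symm.trans, h.trans⟩

lemma eq_side_of_mem_splitOf {e : Sym2 T.V} {S : Finset X} {x : X} (hS : S ∈ T.splitOf e)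
    (hx : x ∈ S) : S = T.side e (T.lab x) := by
  obtain ⟨w, -, rfl⟩ := Finset.mem_image.mp hS
  exact side_eq_of_reachable (mem_side.mp hx)

lemma mem_side_or_mem_side (u v : T.V) (x : X) :
    x ∈ T.side s(u, v) u ∨ x ∈ T.side s(u, v) v := by
  simpa only [mem_side] using (T.isTree.connected.preconnected (T.lab x) u).deleteEdges_or

lemma eq_side_or_eq_side_of_mem_splitOf {u v : T.V} {S : Finset X} (hS : S ∈ T.splitOf s(u, v)) :
    S = T.side s(u, v) u ∨ S = T.side s(u, v) v := by
  obtain ⟨w, -, rfl⟩ := Finset.mem_image.mp hS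
  exact (T.isTree.connected.preconnected w u).deleteEdges_or.imp
    (fun h => (side_eq_of_reachable h).symm) (fun h => (side_eq_of_reachable h).symm)

lemma notMem_side_of_adj {u v : T.V} {x : X} (huv : T.G.Adj u v) (hx : T.lab x = u) :
    x ∉ T.side s(u, v) v := by
  rw [mem_side, hx]
  exact fun hvu => isBridge_iff.mp (T.isBridge_of_adj huv) hvu.symm

lemma side_eq_side_of_disjoint {u v : T.V} {f : Sym2 T.V} (huv : T.G.Adj u v)
    (hne : (T.side s(u, v) v).Nonempty) (hdisj : Disjoint (T.side f u) (T.side s(u, v) v)) :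
    T.side f u = T.side s(u, v) u := by
  obtain rfl | hf := eq_or_ne f s(u, v)
  · rfl
  refine Finset.Subset.antisymm
    (fun x hx => (mem_side_or_mem_side u v x).resolve_right (Finset.disjoint_left.mp hdisj hx)) ?_
  rcases (T.isBridge_of_adj huv).forall_reachable_deleteEdges_or huv hf with h | h
  · exact fun x hx => mem_side.mpr (h _ (mem_side.mp hx))
  · obtain ⟨c, hc⟩ := hne
    exact absurd hc (Finset.disjoint_left.mp hdisj (mem_side.mpr (h _ (mem_side.mp hc))))

end WeakXTree

theorem stmt_2_general {X : Type} [Fintype X] [DecidableEq X]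
    (P : Multiset (Finset (Finset X))) (hP : IsPartitionSystem P)
    (T : WeakXTree X) (hT : T.splits = systemSplits P)
    (u : T.V) (hu : ∃ x : X, T.lab x = u)
    (e : Sym2 T.V) (he : e ∈ T.G.edgeSet) (hue : u ∈ e)
    (B : Finset X) (hB : B ∈ T.splitOf e)
    (hsub : ∀ x : X, T.lab x = u → x ∈ B) :
    ∃ π ∈ P, B ∈ π := by
  obtain ⟨x₀, hx₀⟩ := hu
  obtain ⟨v, rfl⟩ := Sym2.mem_iff_exists.mp hue
  have hx₀v : x₀ ∉ T.side s(u, v) v := WeakXTree.notMem_side_of_adj he hx₀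
  have hBu : B = T.side s(u, v) u :=
    (WeakXTree.eq_side_or_eq_side_of_mem_splitOf hB).resolve_right
      fun h => hx₀v (h ▸ hsub x₀ hx₀)
  obtain ⟨π, hπ, C, hCπ, hC⟩ := mem_systemSplits.mp (hT ▸ T.mem_splits.mpr ⟨_, he, rfl⟩)
  obtain ⟨hpart, -⟩ := hP π hπ
  rcases WeakXTree.eq_side_or_eq_side_of_mem_splitOf (hC ▸ Finset.mem_insert_self C {Cᶜ})
    with hCu | hCv
  · exact ⟨π, hπ, hBu ▸ hCu ▸ hCπ⟩
  obtain ⟨A, ⟨hAπ, hx₀A⟩, -⟩ := hpart.2 x₀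
  obtain ⟨f, -, hf⟩ := T.mem_splits.mp (hT ▸ mem_systemSplits.mpr ⟨π, hπ, A, hAπ, rfl⟩)
  have hAf : A = T.side f u :=
    hx₀ ▸ WeakXTree.eq_side_of_mem_splitOf (hf ▸ Finset.mem_insert_self A {Aᶜ}) hx₀A
  have hAC : Disjoint A C := hpart.disjoint hAπ hCπ fun h => hx₀v (hCv ▸ h ▸ hx₀A)
  have hAB : A = B := by
    rw [hBu, hAf]
    exact WeakXTree.side_eq_side_of_disjoint he (hCv ▸ hpart.1 C hCπ) (hAf ▸ hCv ▸ hAC)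
  exact ⟨π, hπ, hAB ▸ hAπ⟩

/-- if `u` is a labelled vertex of `T_Π`, `e` an edge incident with
`u`, and `B` the part of `σ_e` containing the labels of `u`, then `B` is a part
of some partition in `Π`. -/
theorem stmt_2 {X : Type} [Fintype X] [DecidableEq X] (hX : 2 ≤ Fintype.card X)
    (P : Multiset (Finset (Finset X))) (hP : IsPartitionSystem P)
    (hcomp : CompatibleSystem (systemSplits P))
    (T : WeakXTree X) (hT : T.splits = systemSplits P)
    (u : T.V) (hu : ∃ x : X, T.lab x = u)
    (e : Sym2 T.V) (he : e ∈ T.G.edgeSet) (hue : u ∈ e)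
    (B : Finset X) (hB : B ∈ T.splitOf e)
    (hsub : ∀ x : X, T.lab x = u → x ∈ B) :
    ∃ π ∈ P, B ∈ π :=
  stmt_2_general P hP T hT u hu e he hue B hB hsub
end

section
/- Let Σ be a compatible split system on X. Then the following are equivalent: (i) T_Σ is an even X-tree; (ii) there exists a partition system Π on X with Σ_Π = Σ; (iii) there exists a strongly compatible partition system Π_s on X with Σ_{Π_s} = Σ. -/
open scoped Classical

variable {X : Type} [Fintype X] [DecidableEq X]

/-!
If `Σ(T) = Σ_Π` for a partition system `Π`, count the splits separating two labels `x` and `y`: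
in `Σ(T)` they are the splits of the edges on the path from `φ x` to `φ y`, so there are
`d(φ x, φ y)` of them, while each partition in `Π` contributes either none or two. Hence `T` is
even.

Conversely, if `T` is even, the vertices at odd distance from a fixed label form a colour class of
the bipartition of `T` that contains no label. Such a vertex `v` partitions `X` into the label sets
of the components of `T - v`; this partition has at least two parts since `v` is not a leaf, and its
splits are those of the edges at `v`. Every edge has exactly one end in the colour class, so these
partitions together yield `Σ(T)`. For distinct `v₁` and `v₂`, the component of `T - v₁` towards
`v₂` and the component of `T - v₂` towards `v₁` cover `T`, which gives strong compatibility.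
-/

open Finset

namespace SimpleGraph

variable {V : Type*} {G : SimpleGraph V} {u v w z : V}

lemma Walk.reachable_deleteIncidenceSet_of_notMem_support (p : G.Walk u v) (hz : z ∉ p.support) :
    (G.deleteIncidenceSet z).Reachable u v :=
  ⟨p.toDeleteEdges _ fun e he hez =>
    hz (by
      induction e using Sym2.ind with
      | _ a b =>
        rcases (G.mk'_mem_incidenceSet_iff.1 hez).2 with rfl | rfl
        · exact p.fst_mem_support_of_mem_edges he
        · exact p.snd_mem_support_of_mem_edges he)⟩

lemma Reachable.deleteIncidenceSet_of_not_reachable (h : G.Reachable u v) (hz : ¬ G.Reachable u z) :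
    (G.deleteIncidenceSet z).Reachable u v := by
  obtain ⟨p⟩ := h
  exact p.reachable_deleteIncidenceSet_of_notMem_support fun hzp => hz ⟨p.takeUntil z hzp⟩

lemma IsAcyclic.not_reachable_deleteEdges_of_adj (hG : G.IsAcyclic) (h : G.Adj v w) :
    ¬ (G.deleteEdges {s(v, w)}).Reachable v w :=
  isBridge_iff.1 (isAcyclic_iff_forall_adj_isBridge.1 hG h)

lemma Connected.reachable_deleteEdges_or (hG : G.Connected) (h : G.Adj v w) (u : V) :
    (G.deleteEdges {s(v, w)}).Reachable u v ∨ (G.deleteEdges {s(v, w)}).Reachable u w := by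
  obtain ⟨p, hp⟩ := hG.exists_isPath u v
  by_cases hvw : s(v, w) ∈ p.edges
  · have hw : w ∈ p.support := p.snd_mem_support_of_mem_edges hvw
    have hv := Walk.endpoint_notMem_support_takeUntil hp hw h.ne
    exact .inr ⟨(p.takeUntil w hw).toDeleteEdges _ fun e he hev =>
      hv ((p.takeUntil w hw).fst_mem_support_of_mem_edges (Set.mem_singleton_iff.1 hev ▸ he))⟩
  · exact .inl ((reachable_deleteEdges_iff_exists_walk).2 ⟨p, hvw⟩)

lemma deleteIncidenceSet_le_deleteEdges {e : Sym2 V} (h : v ∈ e) :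
    G.deleteIncidenceSet v ≤ G.deleteEdges {e} := fun a b hab => by
  rw [deleteIncidenceSet_adj] at hab
  refine (deleteEdges_adj ..).2 ⟨hab.1, fun hae => ?_⟩
  rw [← Set.mem_singleton_iff.1 hae, Sym2.mem_iff] at h
  exact h.elim (hab.2.1 ·.symm) (hab.2.2 ·.symm)

lemma IsTree.length_eq_dist_of_isPath (hG : G.IsTree) {p : G.Walk u v} (hp : p.IsPath) :
    p.length = G.dist u v := by
  obtain ⟨q, hq, hlen⟩ := (hG.connected u v).exists_path_of_dist
  rw [(hG.existsUnique_path u v).unique hp hq, hlen]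

lemma IsTree.not_reachable_deleteEdges_iff (hG : G.IsTree) {p : G.Walk u v} (hp : p.IsPath)
    (e : Sym2 V) : ¬ (G.deleteEdges {e}).Reachable u v ↔ e ∈ p.edges := by
  refine ⟨fun h => by_contra fun he => h ⟨p.toDeleteEdges _ fun e' he' hee' => he ?_⟩, ?_⟩
  · rwa [← Set.mem_singleton_iff.1 hee']
  · rintro he ⟨q⟩
    have hpq : p = q.toPath.1.mapLe (deleteEdges_le _) :=
      (hG.existsUnique_path u v).unique hp ((Walk.isPath_mapLe _).2 q.toPath.2)
    rw [hpq, Walk.edges_mapLe_eq_edges] at he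
    simpa using (q.toPath.1.edges_subset_edgeSet he)

lemma IsTree.card_filter_not_reachable_deleteEdges [Fintype V] [DecidableEq V] (hG : G.IsTree)
    (u v : V) :
    #{e ∈ G.edgeFinset | ¬ (G.deleteEdges {e}).Reachable u v} = G.dist u v := by
  obtain ⟨p, hp⟩ := hG.connected.exists_isPath u v
  have : {e ∈ G.edgeFinset | ¬ (G.deleteEdges {e}).Reachable u v} = p.edges.toFinset := by
    ext e
    rw [Finset.mem_filter, hG.not_reachable_deleteEdges_iff hp, List.mem_toFinset,
      mem_edgeFinset, and_iff_right_of_imp fun he => p.edges_subset_edgeSet he]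
  rw [this, List.toFinset_card_of_nodup hp.edges_nodup, Walk.length_edges,
    hG.length_eq_dist_of_isPath hp]

lemma IsTree.eq_of_adj_of_dist_eq_add_one (hG : G.IsTree) {u₁ u₂ : V} (h₁ : G.Adj u₁ z)
    (h₂ : G.Adj u₂ z) (hd₁ : G.dist v z = G.dist v u₁ + 1) (hd₂ : G.dist v z = G.dist v u₂ + 1) :
    u₁ = u₂ := by
  obtain ⟨p₁, hp₁⟩ := hG.connected.exists_walk_length_eq_dist v u₁
  obtain ⟨p₂, hp₂⟩ := hG.connected.exists_walk_length_eq_dist v u₂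
  have hq₁ := (p₁.concat h₁).isPath_of_length_eq_dist (by rw [Walk.length_concat, hp₁, ← hd₁])
  have hq₂ := (p₂.concat h₂).isPath_of_length_eq_dist (by rw [Walk.length_concat, hp₂, ← hd₂])
  exact (Walk.concat_inj ((hG.existsUnique_path v z).unique hq₁ hq₂)).1

lemma Preconnected.exists_adj_reachable_deleteIncidenceSet (hG : G.Preconnected) (h : v ≠ z) :
    ∃ w, G.Adj v w ∧ (G.deleteIncidenceSet v).Reachable w z := by
  obtain ⟨p, hp⟩ := hG.exists_isPath v z
  cases p with
  | nil => exact absurd rfl h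
  | cons hw q =>
    exact ⟨_, hw,
      q.reachable_deleteIncidenceSet_of_notMem_support ((Walk.cons_isPath_iff _ _).1 hp).2⟩

lemma IsAcyclic.not_reachable_deleteIncidenceSet (hG : G.IsAcyclic) {w₁ w₂ : V}
    (h₁ : G.Adj v w₁) (h₂ : G.Adj v w₂) (hne : w₁ ≠ w₂) :
    ¬ (G.deleteIncidenceSet v).Reachable w₁ w₂ := by
  intro h
  have hvw₂ : (G.deleteEdges {s(v, w₁)}).Adj w₂ v :=
    (deleteEdges_adj ..).2 ⟨h₂.symm, by simp [hne.symm, h₂.ne']⟩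
  exact hG.not_reachable_deleteEdges_of_adj h₁
    ((h.mono (deleteIncidenceSet_le_deleteEdges (Sym2.mem_mk_left _ _))).trans hvw₂.reachable).symm

lemma deleteIncidenceSet_mono {H : SimpleGraph V} (h : H ≤ G) :
    H.deleteIncidenceSet v ≤ G.deleteIncidenceSet v := fun a b hab => by
  rw [deleteIncidenceSet_adj] at hab ⊢
  exact ⟨h hab.1, hab.2⟩

lemma IsAcyclic.reachable_deleteEdges_iff (hG : G.IsAcyclic) (h : G.Adj v w) :
    (G.deleteEdges {s(v, w)}).Reachable w z ↔ (G.deleteIncidenceSet v).Reachable w z :=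
  ⟨fun hz => (hz.deleteIncidenceSet_of_not_reachable
      (hG.not_reachable_deleteEdges_of_adj h ∘ Reachable.symm)).mono
      (deleteIncidenceSet_mono (deleteEdges_le _)),
    fun hz => hz.mono (deleteIncidenceSet_le_deleteEdges (Sym2.mem_mk_left _ _))⟩

lemma IsTree.reachable_deleteEdges_iff_not_reachable (hG : G.IsTree) (h : G.Adj v w) (z : V) :
    (G.deleteEdges {s(v, w)}).Reachable v z ↔ ¬ (G.deleteEdges {s(v, w)}).Reachable w z :=
  ⟨fun hv hw => hG.isAcyclic.not_reachable_deleteEdges_of_adj h (hv.trans hw.symm),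
    fun hw => ((hG.connected.reachable_deleteEdges_or h z).resolve_right (hw ·.symm)).symm⟩

/-- Here `w₁` is the first step from `v₁` towards `v₂`, and `w₂` the first step back. -/
lemma IsTree.reachable_deleteIncidenceSet_or {v₁ v₂ w₁ w₂ : V} (hG : G.IsTree)
    (h₁ : G.Adj v₁ w₁) (hw₁ : (G.deleteIncidenceSet v₁).Reachable w₁ v₂)
    (hw₂ : (G.deleteIncidenceSet v₂).Reachable w₂ v₁) (z : V) :
    (G.deleteIncidenceSet v₁).Reachable w₁ z ∨ (G.deleteIncidenceSet v₂).Reachable w₂ z := by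
  refine or_iff_not_imp_left.2 fun hz => hw₂.trans ?_
  rw [← hG.isAcyclic.reachable_deleteEdges_iff h₁, ← hG.reachable_deleteEdges_iff_not_reachable h₁]
    at hz
  have hv₂ : ¬ (G.deleteEdges {s(v₁, w₁)}).Reachable v₁ v₂ := by
    rw [hG.reachable_deleteEdges_iff_not_reachable h₁, not_not,
      hG.isAcyclic.reachable_deleteEdges_iff h₁]
    exact hw₁
  exact (hz.deleteIncidenceSet_of_not_reachable hv₂).mono
    (deleteIncidenceSet_mono (deleteEdges_le _))

lemma edgeFinset_val_eq_bind_neighborFinset [Fintype V] (W : Finset V)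
    (hW : ∀ ⦃u v⦄, G.Adj u v → (u ∈ W ↔ v ∉ W)) :
    G.edgeFinset.val = W.val.bind fun v => (G.neighborFinset v).val.map (s(v, ·)) := by
  refine (Multiset.Nodup.ext G.edgeFinset.nodup (Multiset.nodup_bind.2 ⟨fun v _ => ?_, ?_⟩)).2 ?_
  · exact (G.neighborFinset v).nodup.map fun a b => Sym2.congr_right.1
  · refine W.nodup.pairwise fun v₁ h₁ v₂ h₂ hne => Multiset.disjoint_left.2 ?_
    simp only [Multiset.mem_map, Finset.mem_val, mem_neighborFinset]
    rintro _ ⟨w₁, hw₁, rfl⟩ ⟨w₂, hw₂, he⟩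
    obtain ⟨rfl, rfl⟩ := (Sym2.eq_iff.1 he).resolve_left (fun h => hne h.1.symm)
    exact (hW hw₁).1 h₁ h₂
  · intro e
    induction e using Sym2.ind with
    | _ a b =>
      simp only [Finset.mem_val, mem_edgeFinset, mem_edgeSet, Multiset.mem_bind,
        Multiset.mem_map, mem_neighborFinset]
      refine ⟨fun hab => ?_, ?_⟩
      · by_cases ha : a ∈ W
        · exact ⟨a, ha, b, hab, rfl⟩
        · exact ⟨b, by simpa [ha] using hW hab, a, hab.symm, Sym2.eq_swap⟩
      · rintro ⟨v, -, w, hvw, he⟩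
        rwa [← mem_edgeSet, ← he]

end SimpleGraph

def Separates (σ : Finset (Finset X)) (x y : X) : Prop := ∃ A ∈ σ, x ∈ A ∧ y ∉ A

lemma IsPartition.card_filter_mem {α : Type} [DecidableEq α] {π : Finset (Finset α)}
    (hπ : IsPartition π) (a : α) : #{A ∈ π | a ∈ A} = 1 := by
  obtain ⟨A, hA, hA_unique⟩ := hπ.2 a
  exact card_eq_one.2 ⟨A, ext fun B => by
    rw [mem_filter, mem_singleton]
    exact ⟨hA_unique B, fun h => h ▸ hA⟩⟩

lemma separates_pair_compl_iff (A : Finset X) (x y : X) :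
    Separates {A, Aᶜ} x y ↔ Odd ((if x ∈ A then 1 else 0) + if y ∈ A then 1 else 0) := by
  by_cases hx : x ∈ A <;> by_cases hy : y ∈ A <;> simp [Separates, hx, hy]

/-- The parts separating `x` and `y` are the `A` with `[x ∈ A] + [y ∈ A]` odd, and these summands
add up to `2`. -/
lemma IsPartition.even_card_filter_separates {π : Finset (Finset X)} (hπ : IsPartition π)
    (x y : X) : Even (Multiset.card ((partitionSplits π).filter (Separates · x y))) := by
  have hsum : ∑ A ∈ π, ((if x ∈ A then 1 else 0) + if y ∈ A then 1 else 0) = 2 := by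
    rw [sum_add_distrib, sum_boole, sum_boole, hπ.card_filter_mem, hπ.card_filter_mem]; rfl
  rw [partitionSplits, Multiset.filter_map, Multiset.card_map]
  convert (even_sum_iff_even_card_odd _).1 (hsum ▸ even_two) using 2
  exact congrArg Multiset.card (Multiset.filter_congr fun A _ => separates_pair_compl_iff A x y)

lemma even_card_filter_separates_systemSplits {P : Multiset (Finset (Finset X))}
    (hP : ∀ π ∈ P, IsPartition π) (x y : X) :
    Even (Multiset.card ((systemSplits P).filter (Separates · x y))) := by
  rw [systemSplits, Multiset.filter_bind, Multiset.card_bind]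
  refine Multiset.sum_induction Even _ (fun _ _ => Even.add) .zero ?_
  simp only [Multiset.mem_map, Function.comp_apply]
  rintro _ ⟨π, hπ, rfl⟩
  exact (hP π hπ).even_card_filter_separates x y

namespace WeakXTree

open SimpleGraph

variable (T : WeakXTree X)

lemma separates_splitOf_iff (e : Sym2 T.V) (x y : X) :
    Separates (T.splitOf e) x y ↔ ¬ (T.G.deleteEdges {e}).Reachable (T.lab x) (T.lab y) := by
  simp only [Separates, splitOf, mem_image, mem_univ, true_and, exists_exists_eq_and, mem_filter]
  refine ⟨fun ⟨u, hx, hy⟩ hxy => hy (hx.trans hxy), fun h => ⟨T.lab x, .refl _, h⟩⟩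

lemma card_filter_separates_splits (x y : X) :
    Multiset.card (T.splits.filter (Separates · x y)) = T.G.dist (T.lab x) (T.lab y) := by
  rw [splits, Multiset.filter_map, Multiset.card_map,
    ← T.isTree.card_filter_not_reachable_deleteEdges]
  exact congrArg Multiset.card (Multiset.filter_congr fun e _ => T.separates_splitOf_iff e x y)

theorem isEven_of_systemSplits_eq {P : Multiset (Finset (Finset X))} (hP : IsPartitionSystem P)
    (h : systemSplits P = T.splits) : T.IsEven := fun x y => by
  rw [← T.card_filter_separates_splits, ← h]
  exact even_card_filter_separates_systemSplits (fun π hπ => (hP π hπ).1) x y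

noncomputable def branch (v w : T.V) : Finset X :=
  {x | (T.G.deleteIncidenceSet v).Reachable w (T.lab x)}

noncomputable def branches (v : T.V) : Finset (Finset X) :=
  (T.G.neighborFinset v).image (T.branch v)

variable {T}

lemma mem_branch {v w : T.V} {x : X} :
    x ∈ T.branch v w ↔ (T.G.deleteIncidenceSet v).Reachable w (T.lab x) := by
  simp [branch]

/-- A vertex of the branch farthest from `v` is a leaf, hence labelled. -/
lemma branch_nonempty {v w : T.V} (h : T.G.Adj v w) : (T.branch v w).Nonempty := by
  have hG := T.isTree
  obtain ⟨z, hz, hz_max⟩ := exists_max_image {z | (T.G.deleteIncidenceSet v).Reachable w z}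
    (T.G.dist v) ⟨w, by simp⟩
  simp only [mem_filter, mem_univ, true_and] at hz hz_max
  have hzv : z ≠ v := by
    rintro rfl
    have := hz_max w .rfl
    rw [dist_self, dist_eq_one_iff_adj.2 h] at this
    omega
  have hcloser : ∀ y, T.G.Adj z y → T.G.dist v z = T.G.dist v y + 1 := by
    intro y hzy
    refine (hG.dist_eq_dist_add_one_of_adj v hzy).resolve_right fun hy => ?_
    have hyv : y ≠ v := by rintro rfl; simp at hy
    have := hz_max y (hz.trans (deleteIncidenceSet_adj.2 ⟨hzy, hzv, hyv⟩).reachable)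
    omega
  obtain ⟨y, hzy, -⟩ := hG.connected.preconnected.exists_adj_reachable_deleteIncidenceSet hzv
  obtain ⟨x, rfl⟩ := T.leaf_labelled z ⟨y, hzy, fun y' hzy' =>
    hG.eq_of_adj_of_dist_eq_add_one hzy'.symm hzy.symm (hcloser y' hzy') (hcloser y hzy)⟩
  exact ⟨x, mem_branch.2 hz⟩

lemma disjoint_branch {v w₁ w₂ : T.V} (h₁ : T.G.Adj v w₁) (h₂ : T.G.Adj v w₂) (hne : w₁ ≠ w₂) :
    Disjoint (T.branch v w₁) (T.branch v w₂) :=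
  disjoint_left.2 fun _ hx₁ hx₂ => T.isTree.isAcyclic.not_reachable_deleteIncidenceSet h₁ h₂ hne
    ((mem_branch.1 hx₁).trans (mem_branch.1 hx₂).symm)

lemma exists_mem_branch {v : T.V} {x : X} (hx : T.lab x ≠ v) :
    ∃ w, T.G.Adj v w ∧ x ∈ T.branch v w := by
  simpa only [mem_branch] using
    T.isTree.connected.preconnected.exists_adj_reachable_deleteIncidenceSet hx.symm

lemma splitOf_eq {v w : T.V} (h : T.G.Adj v w) :
    T.splitOf s(v, w) = {T.branch v w, (T.branch v w)ᶜ} := by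
  have hG := T.isTree
  let side (u : T.V) : Finset X := {x | (T.G.deleteEdges {s(v, w)}).Reachable u (T.lab x)}
  have side_eq {u u'} (hu : (T.G.deleteEdges {s(v, w)}).Reachable u u') : side u = side u' :=
    ext fun x => by
      simpa only [side, mem_filter, mem_univ, true_and] using ⟨hu.symm.trans, hu.trans⟩
  have side_w : side w = T.branch v w :=
    ext fun x => by simp [side, mem_branch, hG.isAcyclic.reachable_deleteEdges_iff h]
  have side_v : side v = (T.branch v w)ᶜ :=
    ext fun x => by simp [side, ← side_w, hG.reachable_deleteEdges_iff_not_reachable h]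
  ext A
  simp only [splitOf, mem_image, mem_univ, true_and, mem_insert, mem_singleton]
  constructor
  · rintro ⟨u, rfl⟩
    rcases hG.connected.reachable_deleteEdges_or h u with hu | hu
    · exact .inr ((side_eq hu).trans side_v)
    · exact .inl ((side_eq hu).trans side_w)
  · rintro (rfl | rfl)
    exacts [⟨w, side_w⟩, ⟨v, side_v⟩]

lemma injOn_branch (v : T.V) : Set.InjOn (T.branch v) (T.G.neighborSet v) := by
  intro w₁ h₁ w₂ h₂ heq
  by_contra hne
  have := disjoint_branch h₁ h₂ hne
  rw [heq, disjoint_self, bot_eq_empty] at this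
  exact (branch_nonempty h₂).ne_empty this

lemma card_branches (v : T.V) : #(T.branches v) = T.G.degree v := by
  rw [branches, card_image_of_injOn (by simpa using injOn_branch v), card_neighborFinset_eq_degree]

lemma partitionSplits_branches (v : T.V) :
    partitionSplits (T.branches v) = (T.G.neighborFinset v).val.map fun w => T.splitOf s(v, w) := by
  rw [partitionSplits, branches, image_val_of_injOn (by simpa using injOn_branch v),
    Multiset.map_map]
  exact Multiset.map_congr rfl fun w hw => (T.splitOf_eq (by simpa using hw)).symm

lemma isPartition_branches {v : T.V} (hv : v ∉ Set.range T.lab) : IsPartition (T.branches v) := by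
  refine ⟨?_, fun x => ?_⟩
  · simp only [branches, mem_image, mem_neighborFinset]
    rintro _ ⟨w, hw, rfl⟩
    exact branch_nonempty hw
  · obtain ⟨w, hw, hx⟩ := exists_mem_branch fun h => hv ⟨x, h⟩
    refine ⟨T.branch v w, ⟨mem_image_of_mem _ ((mem_neighborFinset ..).2 hw), hx⟩, ?_⟩
    rintro _ ⟨hA, hxA⟩
    obtain ⟨w', hw', rfl⟩ := mem_image.1 hA
    rw [mem_neighborFinset] at hw'
    by_contra hne
    exact disjoint_left.1 (disjoint_branch hw' hw fun h => hne (h ▸ rfl)) hxA hx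

/-- An unlabelled vertex is no leaf, and it is not isolated since `T` is connected and has
labelled vertices. -/
lemma two_le_card_branches [Nonempty X] {v : T.V} (hv : v ∉ Set.range T.lab) :
    2 ≤ #(T.branches v) := by
  obtain ⟨x⟩ := ‹Nonempty X›
  obtain ⟨w, hw, -⟩ := exists_mem_branch fun h => hv ⟨x, h⟩
  have h₀ : T.G.degree v ≠ 0 := (T.G.degree_pos_iff_exists_adj v).2 ⟨w, hw⟩ |>.ne'
  have h₁ : T.G.degree v ≠ 1 := fun h =>
    hv (T.leaf_labelled v (degree_eq_one_iff_existsUnique_adj.1 h))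
  rw [card_branches]
  omega

lemma exists_branch_union_eq_univ {v₁ v₂ : T.V} (hne : v₁ ≠ v₂) :
    ∃ A ∈ T.branches v₁, ∃ B ∈ T.branches v₂, A ∪ B = univ := by
  have hG := T.isTree
  obtain ⟨w₁, h₁, hw₁⟩ := hG.connected.preconnected.exists_adj_reachable_deleteIncidenceSet hne
  obtain ⟨w₂, h₂, hw₂⟩ := hG.connected.preconnected.exists_adj_reachable_deleteIncidenceSet hne.symm
  refine ⟨_, mem_image_of_mem _ ((mem_neighborFinset ..).2 h₁),
    _, mem_image_of_mem _ ((mem_neighborFinset ..).2 h₂), eq_univ_of_forall fun x => ?_⟩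
  simpa only [mem_union, mem_branch] using hG.reachable_deleteIncidenceSet_or h₁ hw₁ hw₂ (T.lab x)

lemma stronglyCompatible_map_branches (W : Multiset T.V) :
    StronglyCompatible (W.map T.branches) := by
  simp only [StronglyCompatible, Multiset.mem_map]
  rintro _ ⟨v₁, -, rfl⟩ _ ⟨v₂, -, rfl⟩
  by_cases hv : v₁ = v₂
  · exact .inl (hv ▸ rfl)
  · exact .inr (exists_branch_union_eq_univ hv)

lemma systemSplits_map_branches (W : Finset T.V)
    (hW : ∀ ⦃u v⦄, T.G.Adj u v → (u ∈ W ↔ v ∉ W)) :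
    systemSplits (W.val.map T.branches) = T.splits := by
  rw [systemSplits, Multiset.bind_map, splits, edgeFinset_val_eq_bind_neighborFinset W hW,
    Multiset.map_bind]
  exact Multiset.bind_congr fun v _ => by rw [partitionSplits_branches, Multiset.map_map]; rfl

theorem exists_stronglyCompatible_of_isEven [Nonempty X] (hT : T.IsEven) :
    ∃ P : Multiset (Finset (Finset X)),
      IsPartitionSystem P ∧ StronglyCompatible P ∧ systemSplits P = T.splits := by
  obtain ⟨x₀⟩ := ‹Nonempty X›
  let W : Finset T.V := {v | Odd (T.G.dist (T.lab x₀) v)}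
  have hW_unlabelled : ∀ v ∈ W, v ∉ Set.range T.lab := by
    rintro _ hv ⟨x, rfl⟩
    exact Nat.not_odd_iff_even.2 (hT x₀ x) (by simpa [W] using hv)
  have hW_edge : ∀ ⦃u v⦄, T.G.Adj u v → (u ∈ W ↔ v ∉ W) := by
    intro u v h
    rcases T.isTree.dist_eq_dist_add_one_of_adj (T.lab x₀) h with h' | h' <;>
      simp [W, h', Nat.odd_add_one]
  refine ⟨W.val.map T.branches, ?_, stronglyCompatible_map_branches _,
    systemSplits_map_branches W hW_edge⟩
  simp only [IsPartitionSystem, Multiset.mem_map, Finset.mem_val]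
  rintro _ ⟨v, hv, rfl⟩
  exact ⟨isPartition_branches (hW_unlabelled v hv), two_le_card_branches (hW_unlabelled v hv)⟩

end WeakXTree

theorem stmt_7_general {X : Type} [Fintype X] [DecidableEq X] (hX : 2 ≤ Fintype.card X)
    (S : Multiset (Finset (Finset X)))
    (T : WeakXTree X) (hT : T.splits = S) :
    (T.IsEven ↔ ∃ P : Multiset (Finset (Finset X)),
        IsPartitionSystem P ∧ systemSplits P = S) ∧
    (T.IsEven ↔ ∃ P : Multiset (Finset (Finset X)),
        IsPartitionSystem P ∧ StronglyCompatible P ∧ systemSplits P = S) := by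
  subst hT
  have : Nonempty X := Fintype.card_pos_iff.1 (by omega)
  exact ⟨⟨fun hE => (T.exists_stronglyCompatible_of_isEven hE).imp fun _ hP => ⟨hP.1, hP.2.2⟩,
      fun ⟨_, hP, hPT⟩ => T.isEven_of_systemSplits_eq hP hPT⟩,
    ⟨T.exists_stronglyCompatible_of_isEven,
      fun ⟨_, hP, _, hPT⟩ => T.isEven_of_systemSplits_eq hP hPT⟩⟩

/-- for a compatible split system `Σ` the following are equivalent:
(i) `T_Σ` is even; (ii) there is a partition system `Π` with `Σ_Π = Σ`;
(iii) there is a strongly compatible partition system `Π_s` with `Σ_{Π_s} = Σ`. -/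
theorem stmt_7 {X : Type} [Fintype X] [DecidableEq X] (hX : 2 ≤ Fintype.card X)
    (S : Multiset (Finset (Finset X))) (hS : IsSplitSystem S)
    (hcomp : CompatibleSystem S)
    (T : WeakXTree X) (hT : T.splits = S) :
    (T.IsEven ↔ ∃ P : Multiset (Finset (Finset X)),
        IsPartitionSystem P ∧ systemSplits P = S) ∧
    (T.IsEven ↔ ∃ P : Multiset (Finset (Finset X)),
        IsPartitionSystem P ∧ StronglyCompatible P ∧ systemSplits P = S) :=
  stmt_7_general hX S T hT
end
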